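/- Let {φⱼ} be holomorphic functions mapping an open set G ⊆ ℂ to itself such that for every compact disk K ⊂ G, ∑ⱼ supₓ∈K |φⱼ(z) − z| < ∞. Then for every compact disk K ⊂ G and every ρ > 0 there exists N such that for all m ≥ n > N, supₓ∈K |φₙ(φₙ₊₁(...φₘ(z))) − z| < ρ. -/
import Mathlib


open Complex Metric Filter Topology

/-- `compSeg φ n k = φ n ∘ φ (n+1) ∘ ... ∘ φ (n+k)` (the composition `F_{n,m}` with `m = n + k`). -/
def compSeg (φ : ℕ → ℂ → ℂ) (n : ℕ) : ℕ → ℂ → ℂ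
  | 0 => φ n
  | (k + 1) => fun z => compSeg φ n k (φ (n + k + 1) z)

theorem compSeg_succ' (φ : ℕ → ℂ → ℂ) (n k : ℕ) (z : ℂ) :
    compSeg φ n (k+1) z = φ n (compSeg φ (n+1) k z) := by
  induction k generalizing z with
  | zero => simp [compSeg]
  | succ k ih =>
    show compSeg φ n (k+1) (φ (n + (k+1) + 1) z) = _
    rw [ih]
    congr 1
    show _ = compSeg φ (n+1) k (φ ((n+1) + k + 1) z)
    have : n + (k+1) + 1 = (n+1) + k + 1 := by omega
    rw [this]

theorem stmt_1 (G : Set ℂ) (hG : IsOpen G) (φ : ℕ → ℂ → ℂ)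
    (hmaps : ∀ j, Set.MapsTo (φ j) G G)
    (hdiff : ∀ j, DifferentiableOn ℂ (φ j) G)
    (hsum : ∀ (z₀ : ℂ) (r : ℝ), closedBall z₀ r ⊆ G →
      ∃ c : ℕ → ℝ, Summable c ∧ ∀ j, ∀ z ∈ closedBall z₀ r, ‖φ j z - z‖ ≤ c j) :
    ∀ (z₀ : ℂ) (r : ℝ), closedBall z₀ r ⊆ G → ∀ ρ > (0 : ℝ),
      ∃ N : ℕ, ∀ n m : ℕ, N < n → n ≤ m →
        ∀ z ∈ closedBall z₀ r, ‖compSeg φ n (m - n) z - z‖ < ρ := by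
  intro z₀ r hsub ρ hρ
  rcases lt_or_ge r 0 with hr | hr
  · exact ⟨0, fun n m _ _ z hz => absurd hz (by simp [closedBall_eq_empty.2 hr])⟩
  obtain ⟨ε, hε, hth⟩ := (isCompact_closedBall z₀ r).exists_cthickening_subset_open hG hsub
  rw [cthickening_closedBall hε.le hr] at hth
  obtain ⟨c, hc, hbd⟩ := hsum z₀ (ε + r) hth
  have hc0 : ∀ j, 0 ≤ c j := fun j =>
    (norm_nonneg _).trans (hbd j z₀ (mem_closedBall_self (by positivity)))
  set δ := min ε ρ with hδdef
  have hδ : 0 < δ := lt_min hε hρ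
  obtain ⟨N, hN⟩ := Filter.eventually_atTop.1
    ((tendsto_sum_nat_add c).eventually (gt_mem_nhds hδ))
  -- tail sums
  have htail : ∀ n, N ≤ n → ∀ k, ∑ j ∈ Finset.range k, c (j + n) < δ := by
    intro n hn k
    calc ∑ j ∈ Finset.range k, c (j + n) ≤ ∑' j, c (j + n) :=
          Summable.sum_le_tsum _ (fun i _ => hc0 _) ((summable_nat_add_iff n).2 hc)
      _ < δ := hN n hn
  have hrsub : closedBall z₀ r ⊆ closedBall z₀ (ε + r) :=
    closedBall_subset_closedBall (by linarith)
  have key : ∀ k n, N ≤ n → ∀ z ∈ closedBall z₀ r,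
      ‖compSeg φ n k z - z‖ ≤ ∑ j ∈ Finset.range (k + 1), c (j + n) := by
    intro k
    induction k with
    | zero =>
      intro n hn z hz
      simpa [compSeg] using hbd n z (hrsub hz)
    | succ k ih =>
      intro n hn z hz
      rw [compSeg_succ']
      set w := compSeg φ (n+1) k z with hw
      have hwz : ‖w - z‖ ≤ ∑ j ∈ Finset.range (k + 1), c (j + (n + 1)) :=
        ih (n+1) (by omega) z hz
      have hwlt : ‖w - z‖ < ε :=
        lt_of_le_of_lt hwz ((htail (n+1) (by omega) (k+1)).trans_le (min_le_left _ _))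
      have hwmem : w ∈ closedBall z₀ (ε + r) := by
        rw [mem_closedBall]
        calc dist w z₀ ≤ dist w z + dist z z₀ := dist_triangle _ _ _
          _ ≤ ε + r := by
            rw [dist_eq_norm]
            have := mem_closedBall.1 hz
            linarith [hwlt.le]
      calc ‖φ n w - z‖ ≤ ‖φ n w - w‖ + ‖w - z‖ := by
            simpa using norm_add_le (φ n w - w) (w - z)
        _ ≤ c n + ∑ j ∈ Finset.range (k + 1), c (j + (n + 1)) :=
            add_le_add (hbd n w hwmem) hwz
        _ = ∑ j ∈ Finset.range (k + 2), c (j + n) := by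
            rw [Finset.sum_range_succ' (fun j => c (j + n)) (k+1)]
            simp only [zero_add]
            rw [add_comm]
            congr 1
            apply Finset.sum_congr rfl
            intro j _
            congr 1
            omega
  refine ⟨N, fun n m hn hnm z hz => ?_⟩
  calc ‖compSeg φ n (m - n) z - z‖ ≤ ∑ j ∈ Finset.range (m - n + 1), c (j + n) :=
        key (m - n) n hn.le z hz
    _ < δ := htail n hn.le _
    _ ≤ ρ := min_le_right _ _
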